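/- For a finitely presented A-module N and any indexing set I, the natural map (∏_{i∈I} A) ⊗_A N → ∏_{i∈I} N is an isomorphism. -/

import Mathlib

/-!
Both `N ↦ (ι → A) ⊗[A] N` and `N ↦ (ι → N)` preserve surjections and exactness of
`K → F → N → 0`, and the natural map is an isomorphism for `N = A^n` (swap the two product
indices). Hence it is surjective for every finitely generated `N`; for a presentation
`0 → K → A^n → N → 0` with `K` finitely generated, the five lemma only needs surjectivity at `K`.
-/

universe u

open TensorProduct

/-- The natural map `(∏_{i ∈ ι} A) ⊗[A] N → ∏_{i ∈ ι} N` sending `(aᵢ) ⊗ n` to `(aᵢ • n)`. -/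
noncomputable def piTensorHom (A : Type u) [CommRing A] (ι : Type u) (N : Type u)
    [AddCommGroup N] [Module A N] : ((ι → A) ⊗[A] N) →ₗ[A] (ι → N) :=
  TensorProduct.lift (LinearMap.mk₂ A (fun a n i => a i • n)
    (fun a a' n => by funext i; simp [add_smul])
    (fun c a n => by funext i; simp [mul_smul])
    (fun a n n' => by funext i; simp [smul_add])
    (fun c a n => by funext i; exact smul_comm _ _ _))

theorem Function.Exact.comp_left {M N P : Type*} [Zero P] {f : M → N} {g : N → P}
    (h : Function.Exact f g) (ι : Type*) :
    Function.Exact (fun v : ι → M => f ∘ v) (fun w : ι → N => g ∘ w) := by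
  intro w
  constructor
  · intro hw
    choose v hv using fun i => (h (w i)).mp (congrFun hw i)
    exact ⟨v, funext hv⟩
  · rintro ⟨v, rfl⟩
    funext i
    exact (h _).mpr ⟨v i, rfl⟩

section

variable (A : Type u) [CommRing A] (ι : Type u)

@[simp]
theorem piTensorHom_tmul {N : Type u} [AddCommGroup N] [Module A N] (a : ι → A) (n : N) :
    piTensorHom A ι N (a ⊗ₜ n) = fun i => a i • n :=
  rfl

theorem piTensorHom_comp_lTensor {M N : Type u} [AddCommGroup M] [Module A M]
    [AddCommGroup N] [Module A N] (g : M →ₗ[A] N) :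
    g.compLeft ι ∘ₗ piTensorHom A ι M = piTensorHom A ι N ∘ₗ g.lTensor (ι → A) := by
  ext a m i
  simp

theorem piTensorHom_pi_eq_swap_piScalarRight (κ : Type) [Fintype κ] [DecidableEq κ] :
    ⇑(piTensorHom A ι (κ → A)) = Function.swap ∘ piScalarRight A A (ι → A) κ := by
  ext x i k
  induction x with
  | zero => rfl
  | add x y hx hy =>
    simp only [map_add, Pi.add_apply, Function.comp_apply, Function.swap] at *
    rw [hx, hy]
  | tmul a b => simp [Function.swap, mul_comm]

theorem piTensorHom_pi_bijective (κ : Type) [Finite κ] :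
    Function.Bijective (piTensorHom A ι (κ → A)) := by
  classical
  have := Fintype.ofFinite κ
  rw [piTensorHom_pi_eq_swap_piScalarRight]
  exact (Equiv.piComm _).bijective.comp (piScalarRight A A (ι → A) κ).bijective

theorem piTensorHom_surjective (N : Type u) [AddCommGroup N] [Module A N] [Module.Finite A N] :
    Function.Surjective (piTensorHom A ι N) := by
  obtain ⟨n, f, hf⟩ := Module.Finite.exists_fin' A N
  have hcomp : Function.Surjective (piTensorHom A ι N ∘ f.lTensor (ι → A)) := by
    rw [← LinearMap.coe_comp, ← piTensorHom_comp_lTensor]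
    exact hf.comp_left.comp (piTensorHom_pi_bijective A ι (Fin n)).2
  exact hcomp.of_comp

end

/-- For a finitely presented `A`-module `N` and any indexing set `ι`, the natural map
`(∏_{i ∈ ι} A) ⊗_A N → ∏_{i ∈ ι} N` is an isomorphism. -/
theorem piTensorHom_bijective_of_finitePresentation (A : Type u) [CommRing A] (ι : Type u)
    (N : Type u) [AddCommGroup N] [Module A N] [Module.FinitePresentation A N] :
    Function.Bijective (piTensorHom A ι N) := by
  obtain ⟨n, f, hf⟩ := Module.Finite.exists_fin' A N
  have : Module.Finite A (LinearMap.ker f) :=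
    Module.Finite.iff_fg.mpr (Module.FinitePresentation.fg_ker f hf)
  exact LinearMap.bijective_of_surjective_of_bijective_of_right_exact
    ((LinearMap.ker f).subtype.lTensor (ι → A)) (f.lTensor (ι → A))
    ((LinearMap.ker f).subtype.compLeft ι) (f.compLeft ι)
    (piTensorHom A ι _) (piTensorHom A ι _) (piTensorHom A ι N)
    (piTensorHom_comp_lTensor A ι _) (piTensorHom_comp_lTensor A ι f)
    (lTensor_exact _ f.exact_subtype_ker_map hf) (f.exact_subtype_ker_map.comp_left ι)
    (piTensorHom_surjective A ι _) (piTensorHom_pi_bijective A ι (Fin n))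
    (LinearMap.lTensor_surjective _ hf) hf.comp_left
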